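/- arXiv:2506.04918 — 5 statements merged into one kernel-verified Lean document; each statement's English description precedes it below -/
import Mathlib

section
/- For n ≥ 2, Q_n(x) = (x² - 1)/(2^{n-1} n! (n-1)) · d^n/dx^n [(x² - 1)^{n-1}] (a Rodrigues-type formula). -/
open intervalIntegral Finset Polynomial

/-- The `n`-th Legendre polynomial (as a function), via the Rodrigues formula,
normalized so that `legendreP n 1 = 1`. -/
noncomputable def legendreP (n : ℕ) : ℝ → ℝ :=
  fun x => (1 / (2 ^ n * (n.factorial : ℝ))) * iteratedDeriv n (fun y => (y ^ 2 - 1) ^ n) x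

/-- `Qpoly n x = -∫_x^1 L_{n-1}(t) dt`. -/
noncomputable def Qpoly (n : ℕ) : ℝ → ℝ :=
  fun x => -∫ t in x..(1 : ℝ), legendreP (n - 1) t

private lemma iterD_X_mul (q : ℝ[X]) (k : ℕ) :
    derivative^[k + 1] (X * q) =
      X * derivative^[k + 1] q + ((k : ℝ[X]) + 1) * derivative^[k] q := by
  induction k with
  | zero => simp [derivative_mul]; ring
  | succ k ih =>
    rw [Function.iterate_succ_apply' derivative (k+1) (X*q), ih]
    rw [derivative_add, derivative_mul, derivative_mul, derivative_X, derivative_add,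
      derivative_natCast, derivative_one]
    rw [← Function.iterate_succ_apply' derivative (k+1) q,
        ← Function.iterate_succ_apply' derivative k q]
    push_cast
    ring

private lemma der_sq : derivative ((X : ℝ[X]) ^ 2 - 1) = 2 * X := by
  rw [derivative_sub, derivative_one, derivative_X_pow, C_eq_natCast]
  norm_num

private lemma iterD_sq_mul (q : ℝ[X]) (k : ℕ) :
    derivative^[k + 2] ((X ^ 2 - 1) * q) =
      (X ^ 2 - 1) * derivative^[k + 2] q
        + (2 * ((k : ℝ[X]) + 2)) * (X * derivative^[k + 1] q)
        + (((k : ℝ[X]) + 2) * ((k : ℝ[X]) + 1)) * derivative^[k] q := by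
  induction k with
  | zero =>
    show derivative^[2] ((X ^ 2 - 1) * q) = _
    rw [Function.iterate_succ_apply' derivative 1 ((X^2-1)*q),
        Function.iterate_succ_apply' derivative 0 ((X^2-1)*q), Function.iterate_zero_apply]
    simp only [derivative_mul, derivative_add, der_sq, derivative_X, derivative_ofNat,
      derivative_one, Nat.cast_zero]
    rw [show ((0:ℕ)+2) = 2 from rfl, show ((0:ℕ)+1) = 1 from rfl,
        Function.iterate_succ_apply' derivative 1 q,
        Function.iterate_succ_apply' derivative 0 q, Function.iterate_zero_apply]
    ring
  | succ k ih =>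
    rw [Function.iterate_succ_apply' derivative (k+1+1) ((X^2-1)*q), ih]
    simp only [derivative_add, derivative_mul, der_sq, derivative_X, derivative_one,
      derivative_natCast, derivative_ofNat]
    rw [← Function.iterate_succ_apply' derivative (k+2) q,
        ← Function.iterate_succ_apply' derivative (k+1) q,
        ← Function.iterate_succ_apply' derivative k q]
    push_cast
    ring

/-- The key polynomial identity:
`(X²-1) · D^(m+2) (X²-1)^(m+1) = (m+2)(m+1) · D^m (X²-1)^(m+1)`. -/
private lemma key_poly (m : ℕ) :
    ((X : ℝ[X]) ^ 2 - 1) * derivative^[m + 2] (((X : ℝ[X]) ^ 2 - 1) ^ (m + 1)) =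
      (((m : ℝ[X]) + 2) * ((m : ℝ[X]) + 1)) *
        derivative^[m] (((X : ℝ[X]) ^ 2 - 1) ^ (m + 1)) := by
  set P : ℝ[X] := ((X : ℝ[X]) ^ 2 - 1) ^ (m + 1) with hP
  -- base identity: (X²-1) * P' = 2(m+1) X * P
  have base : ((X : ℝ[X]) ^ 2 - 1) * derivative P = (C (2 * ((m : ℝ) + 1))) * (X * P) := by
    rw [hP, derivative_pow]
    simp only [derivative_sub, derivative_pow, derivative_X, derivative_one]
    rw [show (m + 1 : ℕ) - 1 = m from rfl]
    have : ((X : ℝ[X]) ^ 2 - 1) ^ (m + 1) = ((X : ℝ[X]) ^ 2 - 1) * ((X:ℝ[X])^2-1) ^ m := by ring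
    rw [this]
    simp only [map_mul, map_add, map_ofNat, C_1, Polynomial.C_eq_natCast]
    push_cast
    ring
  -- apply D^(m+2) to both sides
  have happ := congrArg (derivative^[m + 2]) base
  have hL : derivative^[m + 2] (((X : ℝ[X]) ^ 2 - 1) * derivative P) =
      (X ^ 2 - 1) * derivative^[m + 3] P
        + (2 * ((m : ℝ[X]) + 2)) * (X * derivative^[m + 2] P)
        + (((m : ℝ[X]) + 2) * ((m : ℝ[X]) + 1)) * derivative^[m + 1] P := by
    rw [iterD_sq_mul (derivative P) m]
    rw [← Function.iterate_succ_apply derivative (m+2) P,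
        ← Function.iterate_succ_apply derivative (m+1) P,
        ← Function.iterate_succ_apply derivative m P]
  have hR : derivative^[m + 2] ((C (2 * ((m : ℝ) + 1))) * (X * P)) =
      (C (2 * ((m : ℝ) + 1))) * (X * derivative^[m + 2] P
        + ((m : ℝ[X]) + 2) * derivative^[m + 1] P) := by
    rw [iterate_derivative_C_mul, iterD_X_mul P (m + 1)]
    push_cast
    ring_nf
  rw [hL, hR] at happ
  -- the ODE, in divergence form
  have ode : (X ^ 2 - 1) * derivative^[m + 3] P + 2 * X * derivative^[m + 2] P =
      (((m : ℝ[X]) + 2) * ((m : ℝ[X]) + 1)) * derivative^[m + 1] P := by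
    have hc : (C (2 * ((m : ℝ) + 1)) : ℝ[X]) = 2 * ((m : ℝ[X]) + 1) := by
      rw [map_mul, map_add, map_one, map_ofNat, map_natCast]
    rw [hc] at happ
    linear_combination happ
  -- the difference has zero derivative
  set Dff : ℝ[X] := (X ^ 2 - 1) * derivative^[m + 2] P
      - (((m : ℝ[X]) + 2) * ((m : ℝ[X]) + 1)) * derivative^[m] P with hDff
  have hder : derivative Dff = 0 := by
    rw [hDff, derivative_sub]
    simp only [derivative_mul, der_sq, derivative_one, derivative_add, derivative_natCast,
      derivative_ofNat]
    rw [← Function.iterate_succ_apply' derivative (m+2) P,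
        ← Function.iterate_succ_apply' derivative m P]
    linear_combination ode
  have hconst : Dff = C (Dff.coeff 0) := eq_C_of_derivative_eq_zero hder
  -- evaluate at 1
  have heval0 : (derivative^[m] P).eval 1 = 0 := by
    obtain ⟨q, hq⟩ := pow_sub_dvd_iterate_derivative_pow ((X : ℝ[X]) ^ 2 - 1) (m + 1) m
    rw [← hP] at hq
    rw [hq]
    have : (m + 1) - m = 1 := by omega
    rw [this, pow_one, eval_mul, eval_sub, eval_pow, eval_X, eval_one]
    norm_num
  have heval : Dff.eval 1 = 0 := by
    rw [hDff]
    simp [heval0]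
  rw [hconst, eval_C] at heval
  have hz : Dff = 0 := by rw [hconst, heval, map_zero]
  rw [hDff] at hz
  exact sub_eq_zero.mp hz


private lemma iteratedDeriv_poly (N j : ℕ) :
    iteratedDeriv j (fun y : ℝ => (y ^ 2 - 1) ^ N) =
      fun x => (derivative^[j] (((X : ℝ[X]) ^ 2 - 1) ^ N)).eval x := by
  induction j with
  | zero => funext x; simp
  | succ j ih =>
    rw [iteratedDeriv_succ, ih]
    funext x
    rw [Function.iterate_succ_apply']
    exact Polynomial.deriv (𝕜 := ℝ) (p := derivative^[j] (((X : ℝ[X]) ^ 2 - 1) ^ N))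

theorem stmt2 (n : ℕ) (hn : 2 ≤ n) (x : ℝ) :
    Qpoly n x = (x ^ 2 - 1) / (2 ^ (n - 1) * (n.factorial : ℝ) * ((n : ℝ) - 1)) *
      iteratedDeriv n (fun y => (y ^ 2 - 1) ^ (n - 1)) x := by
  obtain ⟨m, rfl⟩ : ∃ m, n = m + 2 := ⟨n - 2, by omega⟩
  set P : ℝ[X] := ((X : ℝ[X]) ^ 2 - 1) ^ (m + 1) with hP
  have hsub1 : m + 2 - 1 = m + 1 := rfl
  -- the Legendre function as polynomial eval
  have hleg : ∀ t : ℝ, legendreP (m + 1) t =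
      (1 / (2 ^ (m + 1) * ((m + 1).factorial : ℝ))) * (derivative^[m + 1] P).eval t := by
    intro t
    rw [legendreP, iteratedDeriv_poly]
  -- antiderivative
  set c : ℝ := 1 / (2 ^ (m + 1) * ((m + 1).factorial : ℝ)) with hc
  have hF : ∀ t : ℝ, HasDerivAt (fun s => c * (derivative^[m] P).eval s)
      (legendreP (m + 1) t) t := by
    intro t
    rw [hleg t]
    have := ((Polynomial.hasDerivAt (derivative^[m] P) t).const_mul c)
    rwa [← Function.iterate_succ_apply' derivative m P] at this
  have hint : IntervalIntegrable (legendreP (m + 1)) MeasureTheory.volume x 1 := by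
    apply Continuous.intervalIntegrable
    have : legendreP (m + 1) = fun t => c * (derivative^[m + 1] P).eval t := by
      funext t; exact hleg t
    rw [this]
    exact continuous_const.mul (Polynomial.continuous _)
  have hI : ∫ t in x..(1:ℝ), legendreP (m + 1) t =
      c * (derivative^[m] P).eval 1 - c * (derivative^[m] P).eval x :=
    intervalIntegral.integral_eq_sub_of_hasDerivAt (fun t _ => hF t) hint
  have heval0 : (derivative^[m] P).eval 1 = 0 := by
    obtain ⟨q, hq⟩ := pow_sub_dvd_iterate_derivative_pow ((X : ℝ[X]) ^ 2 - 1) (m + 1) m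
    rw [← hP] at hq
    rw [hq]
    have : (m + 1) - m = 1 := by omega
    rw [this, pow_one, eval_mul, eval_sub, eval_pow, eval_X, eval_one]
    norm_num
  have hQ : Qpoly (m + 2) x = c * (derivative^[m] P).eval x := by
    rw [Qpoly]
    rw [show (m + 2 - 1) = m + 1 from rfl, hI, heval0]
    ring
  -- RHS
  rw [hQ, show (m + 2 - 1) = m + 1 from rfl, iteratedDeriv_poly]
  -- evaluate the key polynomial identity at x
  have hkey := congrArg (fun p : ℝ[X] => p.eval x) (key_poly m)
  simp only [eval_mul, eval_add, eval_sub, eval_pow, eval_X, eval_one, eval_natCast,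
    eval_ofNat] at hkey
  rw [← hP] at hkey
  -- arithmetic
  have hfac : ((m + 2).factorial : ℝ) = ((m : ℝ) + 2) * ((m + 1).factorial : ℝ) := by
    rw [Nat.factorial_succ]; push_cast; ring
  have hpos1 : ((m + 1).factorial : ℝ) ≠ 0 := by positivity
  have hpos2 : (2 : ℝ) ^ (m + 1) ≠ 0 := by positivity
  have hmm : (((m : ℕ) + 2 : ℕ) : ℝ) - 1 = (m : ℝ) + 1 := by push_cast; ring
  beta_reduce
  rw [← hP]
  conv_rhs => rw [div_mul_eq_mul_div, hkey]
  rw [hc, hfac, hmm]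
  rw [eq_div_iff (by positivity)]
  field_simp
end

section
/- For n ≥ 2, the identity (x² - 1) · d^n/dx^n[(x² - 1)^{n-1}] = n(n-1) · d^{n-2}/dx^{n-2}[(x² - 1)^{n-1}] holds for all real x. -/
open intervalIntegral Finset Polynomial

/-! The polynomial `u = (X² - 1)ᵐ` satisfies `(X² - 1) u' = 2m X u`. Differentiating this `m` times
with Leibniz's rule (only three terms survive, as `X² - 1` has degree two) and cancelling the
`X u⁽ᵐ⁾` terms leaves `(X² - 1) u⁽ᵐ⁺¹⁾ = (m + 1) m u⁽ᵐ⁻¹⁾`, the theorem for `n = m + 1`. -/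

namespace Polynomial

theorem iterate_derivative_derivative_mul_X_sq' {R : Type*} [CommSemiring R] (p : R[X]) (n : ℕ) :
    derivative^[n] (derivative p * X ^ 2) =
      derivative^[n + 1] p * X ^ 2 + (2 * n) • (derivative^[n] p * X) +
        (n * (n - 1)) • derivative^[n - 1] p := by
  rcases n with _ | n
  · simp
  · rw [pow_two, ← mul_assoc, iterate_derivative_mul_X, iterate_derivative_derivative_mul_X,
      Nat.add_sub_cancel, iterate_derivative_derivative_mul_X]
    simp only [nsmul_eq_mul]
    push_cast
    ring

theorem X_sq_sub_one_mul_iterate_derivative_pow {R : Type*} [CommRing R] (m : ℕ) :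
    (X ^ 2 - 1 : R[X]) * derivative^[m + 1] ((X ^ 2 - 1) ^ m) =
      ((m + 1) * m) • derivative^[m - 1] ((X ^ 2 - 1 : R[X]) ^ m) := by
  set u : R[X] := (X ^ 2 - 1) ^ m
  have hode : derivative u * (X ^ 2 - 1) = (2 * m) • (u * X) := by
    rcases m with _ | m
    · simp [u]
    · rw [derivative_pow_succ, derivative_sub, derivative_X_sq, derivative_one, nsmul_eq_mul]
      simp only [map_add, map_natCast, map_one, map_ofNat]
      push_cast
      ring
  have h := congrArg (derivative^[m]) hode
  simp only [mul_sub, mul_one, iterate_map_sub, iterate_map_nsmul,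
    iterate_derivative_derivative_mul_X_sq', iterate_derivative_mul_X,
    ← Function.iterate_succ_apply] at h
  have hcast : ((m * (m - 1) : ℕ) : R[X]) = m * m - m := by
    rcases m with _ | m <;> push_cast <;> ring
  simp only [nsmul_eq_mul, hcast] at h ⊢
  push_cast at h ⊢
  linear_combination h

end Polynomial

theorem iteratedDeriv_polynomial_eval {𝕜 : Type*} [NontriviallyNormedField 𝕜] (p : 𝕜[X])
    (k : ℕ) : iteratedDeriv k (fun y => p.eval y) = fun y => (derivative^[k] p).eval y := by
  induction k with
  | zero => simp
  | succ k ih =>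
    ext y
    rw [iteratedDeriv_succ, ih, Function.iterate_succ_apply', Polynomial.deriv]

theorem stmt3 (n : ℕ) (hn : 2 ≤ n) (x : ℝ) :
    (x ^ 2 - 1) * iteratedDeriv n (fun y : ℝ => (y ^ 2 - 1) ^ (n - 1)) x =
      (n : ℝ) * ((n : ℝ) - 1) * iteratedDeriv (n - 2) (fun y : ℝ => (y ^ 2 - 1) ^ (n - 1)) x := by
  obtain ⟨m, rfl⟩ : ∃ m, n = m + 1 := ⟨n - 1, by omega⟩
  have hpoly : (fun y : ℝ => (y ^ 2 - 1) ^ (m + 1 - 1)) =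
      fun y => ((X ^ 2 - 1 : ℝ[X]) ^ m).eval y := by
    simp
  have h := congrArg (eval x) (X_sq_sub_one_mul_iterate_derivative_pow (R := ℝ) m)
  simp only [eval_mul, eval_sub, eval_pow, eval_X, eval_one, nsmul_eq_mul, eval_natCast] at h
  rw [hpoly, iteratedDeriv_polynomial_eval, iteratedDeriv_polynomial_eval,
    show m + 1 - 2 = m - 1 by omega]
  dsimp only
  rw [h]
  push_cast
  ring
end

section
/- For n, m ≥ 2 with n ≠ m, ∫_{-1}^1 Q_n(x) Q_m(x) / (1 - x²) dx = 0; i.e., the polynomials Q_n are orthogonal on [-1,1] with respect to the weight 1/(1 - x²). -/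
open intervalIntegral Finset Polynomial

/-! ### Auxiliary machinery -/

/-- A polynomial antiderivative. -/
noncomputable def antid (p : ℝ[X]) : ℝ[X] :=
  p.sum fun i a => C (a / (i + 1)) * X ^ (i + 1)

lemma derivative_antid (p : ℝ[X]) : derivative (antid p) = p := by
  conv_rhs => rw [← p.sum_C_mul_X_pow_eq]
  unfold antid Polynomial.sum
  rw [map_sum]
  refine Finset.sum_congr rfl fun i _ => ?_
  rw [derivative_C_mul, derivative_X_pow, Nat.add_sub_cancel, ← mul_assoc, ← C_mul]
  congr 1
  have h : ((i : ℝ) + 1) ≠ 0 := by positivity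
  push_cast
  field_simp

lemma natDegree_antid_le (p : ℝ[X]) : (antid p).natDegree ≤ p.natDegree + 1 := by
  unfold antid Polynomial.sum
  refine natDegree_sum_le_of_forall_le _ _ fun i hi => ?_
  refine (natDegree_C_mul_le _ _).trans ?_
  rw [natDegree_X_pow]
  exact Nat.succ_le_succ (le_natDegree_of_mem_supp i hi)

lemma iteratedDeriv_eval (p : ℝ[X]) (i : ℕ) :
    iteratedDeriv i (fun y => eval y p) = fun x => eval x (derivative^[i] p) := by
  induction i with
  | zero => simp
  | succ k ih =>
    rw [iteratedDeriv_succ, ih, Function.iterate_succ_apply']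
    funext x
    exact ((derivative^[k] p).hasDerivAt x).deriv

/-- The Legendre polynomial as a `Polynomial ℝ`. -/
noncomputable def Lpoly (k : ℕ) : ℝ[X] :=
  C (1 / (2 ^ k * (k.factorial : ℝ))) * derivative^[k] ((X ^ 2 - 1) ^ k)

lemma legendreP_eq (k : ℕ) (x : ℝ) : legendreP k x = eval x (Lpoly k) := by
  unfold legendreP Lpoly
  have h : (fun y : ℝ => (y ^ 2 - 1) ^ k) = fun y => eval y (((X : ℝ[X]) ^ 2 - 1) ^ k) := by
    funext y; simp
  rw [h, iteratedDeriv_eval]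
  simp

lemma natDegree_iterate_derivative_le (p : ℝ[X]) (i : ℕ) :
    (derivative^[i] p).natDegree ≤ p.natDegree - i := by
  induction i with
  | zero => simp
  | succ j ih =>
    rw [Function.iterate_succ_apply']
    calc (derivative (derivative^[j] p)).natDegree ≤ (derivative^[j] p).natDegree - 1 :=
          natDegree_derivative_le _
      _ ≤ (p.natDegree - j) - 1 := by omega
      _ = p.natDegree - (j + 1) := by omega

lemma natDegree_Lpoly_le (k : ℕ) : (Lpoly k).natDegree ≤ k := by
  unfold Lpoly
  refine (natDegree_C_mul_le _ _).trans ?_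
  refine (natDegree_iterate_derivative_le _ _).trans ?_
  have h : (((X : ℝ[X]) ^ 2 - 1) ^ k).natDegree ≤ 2 * k := by
    refine natDegree_pow_le.trans ?_
    have : ((X : ℝ[X]) ^ 2 - 1).natDegree ≤ 2 := by
      have : ((X : ℝ[X]) ^ 2 - 1) = X ^ 2 - C 1 := by simp
      rw [this, natDegree_X_pow_sub_C]
    nlinarith
  omega

lemma dvd_iterate (k : ℕ) : ∀ i ≤ k,
    ((X ^ 2 - 1 : ℝ[X]) ^ (k - i)) ∣ derivative^[i] ((X ^ 2 - 1) ^ k) := by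
  intro i
  induction i with
  | zero => intro _; simp
  | succ j ih =>
    intro h
    obtain ⟨q, hq⟩ := ih (Nat.le_of_succ_le h)
    rw [Function.iterate_succ_apply', hq, derivative_mul, derivative_pow]
    have hkj : k - j = (k - (j + 1)) + 1 := by omega
    refine dvd_add ?_ ?_
    · have h1 : (k - j) - 1 = k - (j + 1) := by omega
      rw [h1]
      exact ((dvd_mul_left _ _).mul_right _).mul_right _
    · exact Dvd.dvd.mul_right (pow_dvd_pow _ (by omega)) _

lemma eval_iterate_eq_zero (k i : ℕ) (h : i < k) (x : ℝ) (hx : x = 1 ∨ x = -1) :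
    eval x (derivative^[i] (((X : ℝ[X]) ^ 2 - 1) ^ k)) = 0 := by
  obtain ⟨q, hq⟩ := dvd_iterate k i h.le
  rw [hq, eval_mul, eval_pow]
  have hx0 : eval x ((X : ℝ[X]) ^ 2 - 1) = 0 := by rcases hx with h | h <;> simp [h]
  rw [hx0, zero_pow (by omega), zero_mul]

lemma poly_intervalIntegrable (p : ℝ[X]) (a b : ℝ) :
    IntervalIntegrable (fun x => eval x p) MeasureTheory.volume a b :=
  p.continuous.intervalIntegrable a b

lemma poly_mul_intervalIntegrable (p q : ℝ[X]) (a b : ℝ) :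
    IntervalIntegrable (fun x => eval x p * eval x q) MeasureTheory.volume a b :=
  (p.continuous.mul q.continuous).intervalIntegrable a b

lemma ortho_aux (k : ℕ) : ∀ i ≤ k, ∀ p : ℝ[X], p.natDegree < i →
    ∫ x in (-1 : ℝ)..1, eval x (derivative^[i] (((X : ℝ[X]) ^ 2 - 1) ^ k)) * eval x p = 0 := by
  intro i
  induction i with
  | zero => intro _ p hp; omega
  | succ j ih =>
    intro hjk p hp
    set G : ℝ[X] := ((X : ℝ[X]) ^ 2 - 1) ^ k with hG
    have hu : ∀ x ∈ Set.uIcc (-1 : ℝ) 1,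
        HasDerivAt (fun y => eval y (derivative^[j] G)) (eval x (derivative^[j+1] G)) x := by
      intro x _
      rw [Function.iterate_succ_apply']
      exact (derivative^[j] G).hasDerivAt x
    have hv : ∀ x ∈ Set.uIcc (-1 : ℝ) 1,
        HasDerivAt (fun y => eval y p) (eval x (derivative p)) x := fun x _ => p.hasDerivAt x
    have key := integral_deriv_mul_eq_sub hu hv
      (poly_intervalIntegrable _ _ _) (poly_intervalIntegrable _ _ _)
    have hb1 : eval (1 : ℝ) (derivative^[j] G) = 0 :=
      eval_iterate_eq_zero k j (by omega) 1 (Or.inl rfl)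
    have hb2 : eval (-1 : ℝ) (derivative^[j] G) = 0 :=
      eval_iterate_eq_zero k j (by omega) (-1) (Or.inr rfl)
    rw [hb1, hb2, zero_mul, zero_mul, sub_zero] at key
    rw [intervalIntegral.integral_add (poly_mul_intervalIntegrable _ _ _ _)
      (poly_mul_intervalIntegrable _ _ _ _)] at key
    have hsecond : ∫ x in (-1 : ℝ)..1, eval x (derivative^[j] G) * eval x (derivative p) = 0 := by
      by_cases h0 : p.natDegree = 0
      · have : derivative p = 0 := by
          rw [p.eq_C_of_natDegree_eq_zero h0]; simp
        simp [this]
      · exact ih (by omega) (derivative p) (by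
          have := natDegree_derivative_lt h0
          omega)
    rw [hsecond, add_zero] at key
    exact key

lemma ortho (k : ℕ) (p : ℝ[X]) (hp : p.natDegree < k) :
    ∫ x in (-1 : ℝ)..1, eval x (Lpoly k) * eval x p = 0 := by
  unfold Lpoly
  simp only [eval_mul, eval_C, mul_assoc]
  rw [intervalIntegral.integral_const_mul, ortho_aux k k le_rfl p hp, mul_zero]

/-- `Qpoly` as a polynomial. -/
noncomputable def Qp (n : ℕ) : ℝ[X] :=
  antid (Lpoly (n - 1)) - C (eval 1 (antid (Lpoly (n - 1))))

lemma derivative_Qp (n : ℕ) : derivative (Qp n) = Lpoly (n - 1) := by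
  unfold Qp
  rw [derivative_sub, derivative_antid, derivative_C, sub_zero]

lemma ftc_antid (p : ℝ[X]) (a b : ℝ) :
    ∫ t in a..b, eval t p = eval b (antid p) - eval a (antid p) := by
  refine integral_eq_sub_of_hasDerivAt (f := fun y => eval y (antid p)) (fun t _ => ?_) (poly_intervalIntegrable _ _ _)
  have h := (antid p).hasDerivAt t
  rwa [derivative_antid] at h

lemma Qpoly_eq (n : ℕ) (x : ℝ) : Qpoly n x = eval x (Qp n) := by
  unfold Qpoly
  simp only [legendreP_eq]
  rw [ftc_antid]
  unfold Qp
  simp only [eval_sub, eval_C]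
  ring

lemma eval_one_Qp (n : ℕ) : eval 1 (Qp n) = 0 := by
  unfold Qp; simp

lemma eval_neg_one_Qp (n : ℕ) (hn : 2 ≤ n) : eval (-1) (Qp n) = 0 := by
  have hdeg : (1 : ℝ[X]).natDegree < n - 1 := by
    rw [natDegree_one]; omega
  have h0 : ∫ x in (-1 : ℝ)..1, eval x (Lpoly (n - 1)) = 0 := by
    have h := ortho (n - 1) 1 hdeg
    simpa using h
  rw [ftc_antid] at h0
  unfold Qp
  simp only [eval_sub, eval_C]
  linarith

lemma natDegree_Qp_le (n : ℕ) (hn : 1 ≤ n) : (Qp n).natDegree ≤ n := by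
  unfold Qp
  refine (natDegree_sub_le _ _).trans ?_
  have h1 : (antid (Lpoly (n - 1))).natDegree ≤ n := by
    refine (natDegree_antid_le _).trans ?_
    have := natDegree_Lpoly_le (n - 1)
    omega
  simp [h1]

lemma Qp_factor (n : ℕ) (hn : 2 ≤ n) :
    ∃ r : ℝ[X], Qp n = (X ^ 2 - 1) * r ∧ r.natDegree ≤ n - 2 := by
  have d1 : (X - C (1 : ℝ)) ∣ Qp n := dvd_iff_isRoot.mpr (eval_one_Qp n)
  have d2 : (X - C (-1 : ℝ)) ∣ Qp n := dvd_iff_isRoot.mpr (eval_neg_one_Qp n hn)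
  have cop : IsCoprime (X - C (1 : ℝ)) (X - C (-1 : ℝ)) :=
    isCoprime_X_sub_C_of_isUnit_sub (by norm_num)
  obtain ⟨r, hr⟩ := cop.mul_dvd d1 d2
  have hprod : (X - C (1 : ℝ)) * (X - C (-1 : ℝ)) = X ^ 2 - 1 := by
    simp only [map_one, map_neg]
    ring
  rw [hprod] at hr
  refine ⟨r, hr, ?_⟩
  by_cases h0 : r = 0
  · simp [h0]
  · have hX : ((X : ℝ[X]) ^ 2 - 1) ≠ 0 := by
      intro h
      have := congrArg (eval 0) h
      norm_num at this
    have hdeg : (Qp n).natDegree = 2 + r.natDegree := by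
      rw [hr, natDegree_mul hX h0]
      congr 1
      have : ((X : ℝ[X]) ^ 2 - 1) = X ^ 2 - C 1 := by simp
      rw [this, natDegree_X_pow_sub_C]
    have := natDegree_Qp_le n (by omega)
    omega

lemma integral_Qp_mul_eq_zero (m : ℕ) (hm : 2 ≤ m) (r : ℝ[X]) (hr : r.natDegree + 1 < m - 1) :
    ∫ x in (-1 : ℝ)..1, eval x (Qp m) * eval x r = 0 := by
  set P := antid r with hP
  have hu : ∀ x ∈ Set.uIcc (-1 : ℝ) 1,
      HasDerivAt (fun y => eval y (Qp m)) (eval x (Lpoly (m - 1))) x := by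
    intro x _
    have h := (Qp m).hasDerivAt x
    rwa [derivative_Qp] at h
  have hv : ∀ x ∈ Set.uIcc (-1 : ℝ) 1,
      HasDerivAt (fun y => eval y P) (eval x r) x := by
    intro x _
    have h := P.hasDerivAt x
    rwa [hP, derivative_antid] at h
  have key := integral_mul_deriv_eq_deriv_mul hu hv
    (poly_intervalIntegrable _ _ _) (poly_intervalIntegrable _ _ _)
  rw [eval_one_Qp, eval_neg_one_Qp m hm, zero_mul, zero_mul, sub_zero, zero_sub] at key
  have hortho : ∫ x in (-1 : ℝ)..1, eval x (Lpoly (m - 1)) * eval x P = 0 := by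
    refine ortho (m - 1) P ?_
    have hPd : P.natDegree ≤ r.natDegree + 1 := natDegree_antid_le r
    omega
  rw [hortho, neg_zero] at key
  exact key

lemma stmt5_lt (n m : ℕ) (hn : 2 ≤ n) (hm : 2 ≤ m) (h : n < m) :
    ∫ x in (-1 : ℝ)..1, Qpoly n x * Qpoly m x / (1 - x ^ 2) = 0 := by
  obtain ⟨r, hr, hdr⟩ := Qp_factor n hn
  have hae : ∀ᵐ x : ℝ ∂MeasureTheory.volume,
      Qpoly n x * Qpoly m x / (1 - x ^ 2) = -(eval x (Qp m) * eval x r) := by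
    have hcnt : ({1, -1} : Set ℝ).Countable := (Set.toFinite _).countable
    filter_upwards [hcnt.ae_notMem MeasureTheory.volume] with x hx
    simp only [Set.mem_insert_iff, Set.mem_singleton_iff, not_or] at hx
    obtain ⟨hx1, hx2⟩ := hx
    have hne : 1 - x ^ 2 ≠ 0 := by
      intro h0
      have : (1 - x) * (1 + x) = 0 := by ring_nf; linarith [h0]
      rcases mul_eq_zero.mp this with h' | h'
      · exact hx1 (by linarith)
      · exact hx2 (by linarith)
    rw [Qpoly_eq, Qpoly_eq, hr]
    simp only [eval_mul, eval_sub, eval_pow, eval_X, eval_one]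
    field_simp
    ring
  rw [intervalIntegral.integral_congr_ae (hae.mono fun x hx _ => hx)]
  rw [intervalIntegral.integral_neg]
  rw [integral_Qp_mul_eq_zero m hm r (by omega), neg_zero]

theorem stmt5 (n m : ℕ) (hn : 2 ≤ n) (hm : 2 ≤ m) (hnm : n ≠ m) :
    ∫ x in (-1 : ℝ)..1, Qpoly n x * Qpoly m x / (1 - x ^ 2) = 0 := by
  rcases lt_or_gt_of_ne hnm with h | h
  · exact stmt5_lt n m hn hm h
  · have := stmt5_lt m n hm hn h
    rw [← this]
    apply intervalIntegral.integral_congr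
    intro x _
    dsimp only
    rw [mul_comm]
end

section
/- For n ≥ 2, ∫_{-1}^1 Q_n(x)² / (1 - x²) dx = 2 / (n(n-1)(2n-1)). -/
/-!
Write `m = n - 1`. Legendre's equation `((1 - x²) L_m')' = -m(m+1) L_m` shows that
`Q_n = -(1 - x²) L_m' / (m(m+1))`, as the right-hand side vanishes at `x = 1`. Hence
`Q_n² / (1 - x²) = (1 - x²) L_m'² / (m(m+1))²`, and one integration by parts against
Legendre's equation turns `∫ (1 - x²) L_m'²` into `m(m+1) ∫ L_m² = m(m+1) · 2/(2m+1)`.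
The norm of `L_m` comes from Rodrigues' formula: `m` integrations by parts move all
derivatives of `(x² - 1)^m` onto one factor, leaving `(2m)! ∫ (1 - x²)^m`, a Wallis integral.
-/

open intervalIntegral Finset Polynomial

open Nat

namespace Polynomial

theorem iterate_derivative_natDegree {R : Type*} [Semiring R] (p : R[X]) :
    derivative^[p.natDegree] p = C (p.natDegree ! * p.leadingCoeff) := by
  rw [eq_C_of_natDegree_le_zero ((natDegree_iterate_derivative p _).trans_eq (Nat.sub_self _)),
    coeff_iterate_derivative, zero_add, Nat.descFactorial_self, nsmul_eq_mul, leadingCoeff]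

theorem iteratedDeriv_eval {𝕜 : Type*} [NontriviallyNormedField 𝕜] (p : 𝕜[X]) (k : ℕ) :
    iteratedDeriv k (fun x => p.eval x) = fun x => (derivative^[k] p).eval x := by
  induction k with
  | zero => simp
  | succ k ih =>
    ext x
    rw [iteratedDeriv_succ, ih, Function.iterate_succ_apply', Polynomial.deriv]

theorem intervalIntegrable_eval (p : ℝ[X]) (a b : ℝ) :
    IntervalIntegrable (fun x => p.eval x) MeasureTheory.volume a b :=
  p.continuous.intervalIntegrable a b

theorem integral_eval_derivative (p : ℝ[X]) (a b : ℝ) :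
    ∫ x in a..b, (derivative p).eval x = p.eval b - p.eval a :=
  integral_eq_sub_of_hasDerivAt (fun x _ => p.hasDerivAt x) (intervalIntegrable_eval _ a b)

theorem integral_eval_mul_derivative (p q : ℝ[X]) (a b : ℝ) :
    ∫ x in a..b, p.eval x * (derivative q).eval x =
      p.eval b * q.eval b - p.eval a * q.eval a - ∫ x in a..b, (derivative p).eval x * q.eval x :=
  integral_mul_deriv_eq_deriv_mul (fun x _ => p.hasDerivAt x) (fun x _ => q.hasDerivAt x)
    (intervalIntegrable_eval _ a b) (intervalIntegrable_eval _ a b)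

theorem integral_eval_mul_iterate_derivative {q : ℝ[X]} {a b : ℝ} {k : ℕ}
    (ha : ∀ j < k, (derivative^[j] q).eval a = 0) (hb : ∀ j < k, (derivative^[j] q).eval b = 0)
    (p : ℝ[X]) :
    ∫ x in a..b, p.eval x * (derivative^[k] q).eval x =
      (-1) ^ k * ∫ x in a..b, (derivative^[k] p).eval x * q.eval x := by
  induction k generalizing p with
  | zero => simp
  | succ k ih =>
    rw [Function.iterate_succ_apply', integral_eval_mul_derivative, ha k k.lt_succ_self,
      hb k k.lt_succ_self, ih (fun j hj => ha j (hj.trans k.lt_succ_self))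
        (fun j hj => hb j (hj.trans k.lt_succ_self)), ← Function.iterate_succ_apply]
    ring

end Polynomial

section Rodrigues

variable {R : Type*} [CommRing R]

theorem X_sq_sub_one_mul_derivative_X_sq_sub_one_pow (m : ℕ) :
    (X ^ 2 - 1 : R[X]) * derivative ((X ^ 2 - 1) ^ m) = 2 * (m : R[X]) * X * (X ^ 2 - 1) ^ m := by
  cases m with
  | zero => simp
  | succ m =>
    rw [derivative_pow, Nat.add_sub_cancel, derivative_sub, derivative_X_sq, derivative_one,
      C_eq_natCast, map_ofNat]
    push_cast
    ring

theorem iterate_derivative_X_sq_sub_one_pow_recurrence (m k : ℕ) :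
    (X ^ 2 - 1 : R[X]) * derivative^[k + 2] ((X ^ 2 - 1) ^ m)
      + 2 * ((k : R[X]) + 1 - (m : R[X])) * X * derivative^[k + 1] ((X ^ 2 - 1) ^ m)
      + ((k : R[X]) + 1) * ((k : R[X]) - 2 * (m : R[X])) * derivative^[k] ((X ^ 2 - 1) ^ m)
      = 0 := by
  induction k with
  | zero =>
    have h := congrArg derivative (X_sq_sub_one_mul_derivative_X_sq_sub_one_pow (R := R) m)
    simp only [derivative_mul, derivative_sub, derivative_X_sq, derivative_one,
      derivative_X, derivative_natCast, derivative_ofNat, map_ofNat] at h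
    simp only [Function.iterate_succ_apply', Function.iterate_zero_apply]
    push_cast at h ⊢
    linear_combination h
  | succ k ih =>
    have h := congrArg derivative ih
    simp only [derivative_add, derivative_mul, derivative_sub, derivative_X_sq, derivative_one,
      derivative_X, derivative_natCast, derivative_ofNat, derivative_zero, map_ofNat,
      ← Function.iterate_succ_apply' derivative] at h
    push_cast at h ⊢
    linear_combination h

theorem eval_iterate_derivative_X_sq_sub_one_pow_eq_zero {m j : ℕ} (hj : j < m) {x : R}
    (hx : x ^ 2 = 1) : (derivative^[j] ((X ^ 2 - 1 : R[X]) ^ m)).eval x = 0 := by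
  obtain ⟨g, hg⟩ := pow_sub_dvd_iterate_derivative_pow (X ^ 2 - 1 : R[X]) m j
  rw [hg, eval_mul, eval_pow, eval_sub, eval_pow, eval_X, eval_one, hx, sub_self,
    zero_pow (Nat.sub_ne_zero_of_lt hj), zero_mul]

theorem iterate_derivative_two_mul_X_sq_sub_one_pow [Nontrivial R] (m : ℕ) :
    derivative^[2 * m] ((X ^ 2 - 1 : R[X]) ^ m) = C ((2 * m)! : R) := by
  have hmonic : (X ^ 2 - 1 : R[X]).Monic := by
    simpa using monic_X_pow_sub_C (1 : R) two_ne_zero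
  have hdeg : ((X ^ 2 - 1 : R[X]) ^ m).natDegree = 2 * m := by
    rw [hmonic.natDegree_pow, show (X ^ 2 - 1 : R[X]) = X ^ 2 - C 1 by simp,
      natDegree_X_pow_sub_C, mul_comm]
  rw [← hdeg, iterate_derivative_natDegree, (hmonic.pow m).leadingCoeff, mul_one]

end Rodrigues

noncomputable def legendrePoly (m : ℕ) : ℝ[X] :=
  C (1 / (2 ^ m * m ! : ℝ)) * derivative^[m] ((X ^ 2 - 1) ^ m)

theorem legendreP_eq_eval_legendrePoly (m : ℕ) :
    legendreP m = fun x => (legendrePoly m).eval x := by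
  ext x
  have hu : (fun y : ℝ => (y ^ 2 - 1) ^ m) = fun y => ((X ^ 2 - 1 : ℝ[X]) ^ m).eval y := by
    simp
  rw [legendreP, hu, iteratedDeriv_eval, legendrePoly, eval_mul, eval_C]

theorem derivative_one_sub_X_sq_mul_derivative_legendrePoly (m : ℕ) :
    derivative ((1 - X ^ 2) * derivative (legendrePoly m)) =
      -(m * (m + 1) : ℝ[X]) * legendrePoly m := by
  have h := iterate_derivative_X_sq_sub_one_pow_recurrence (R := ℝ) m m
  simp only [legendrePoly, derivative_mul, derivative_C, zero_mul, zero_add, derivative_sub,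
    derivative_one, derivative_X_sq, map_ofNat,
    ← Function.iterate_succ_apply' derivative] at h ⊢
  linear_combination (-C (1 / (2 ^ m * m ! : ℝ))) * h

theorem integral_one_sub_sq_pow_succ (m : ℕ) :
    (2 * m + 3 : ℝ) * ∫ x in (-1 : ℝ)..1, (1 - x ^ 2) ^ (m + 1) =
      (2 * m + 2 : ℝ) * ∫ x in (-1 : ℝ)..1, (1 - x ^ 2) ^ m := by
  have hderiv : derivative (X * (1 - X ^ 2) ^ (m + 1) : ℝ[X]) =
      (2 * m + 3 : ℝ[X]) * (1 - X ^ 2) ^ (m + 1) - (2 * m + 2 : ℝ[X]) * (1 - X ^ 2) ^ m := by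
    rw [derivative_mul, derivative_pow, Nat.add_sub_cancel, derivative_sub, derivative_X_sq,
      derivative_one, derivative_X, C_eq_natCast, map_ofNat]
    push_cast
    ring
  have h := integral_eval_derivative (X * (1 - X ^ 2) ^ (m + 1)) (-1) 1
  rw [hderiv] at h
  simp only [eval_sub, eval_mul, eval_add, eval_pow, eval_X, eval_one, eval_natCast,
    eval_ofNat] at h
  rw [integral_sub (f := fun x => (2 * m + 3 : ℝ) * (1 - x ^ 2) ^ (m + 1))
      (g := fun x => (2 * m + 2 : ℝ) * (1 - x ^ 2) ^ m)
      (Continuous.intervalIntegrable (by fun_prop) _ _)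
      (Continuous.intervalIntegrable (by fun_prop) _ _),
    integral_const_mul, integral_const_mul] at h
  norm_num at h
  linarith

theorem factorial_mul_integral_one_sub_sq_pow (m : ℕ) :
    ((2 * m + 1)! : ℝ) * ∫ x in (-1 : ℝ)..1, (1 - x ^ 2) ^ m =
      2 * 4 ^ m * (m ! : ℝ) ^ 2 := by
  induction m with
  | zero => norm_num
  | succ m ih =>
    have hfac : ((2 * (m + 1) + 1)! : ℝ) = (2 * m + 3) * (2 * m + 2) * (2 * m + 1)! := by
      rw [show 2 * (m + 1) + 1 = 2 * m + 1 + 1 + 1 by ring, factorial_succ, factorial_succ]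
      push_cast
      ring
    rw [hfac, factorial_succ m, cast_mul, cast_succ]
    linear_combination (2 * m + 2 : ℝ) * (2 * m + 1)! * integral_one_sub_sq_pow_succ m +
      (2 * m + 2 : ℝ) ^ 2 * ih

theorem integral_iterate_derivative_X_sq_sub_one_pow_sq (m : ℕ) :
    ∫ x in (-1 : ℝ)..1, (derivative^[m] ((X ^ 2 - 1 : ℝ[X]) ^ m)).eval x ^ 2 =
      (2 * m)! * ∫ x in (-1 : ℝ)..1, (1 - x ^ 2) ^ m := by
  have hvanish : ∀ {x : ℝ}, x ^ 2 = 1 →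
      ∀ j < m, (derivative^[j] ((X ^ 2 - 1 : ℝ[X]) ^ m)).eval x = 0 :=
    fun hx _ hj => eval_iterate_derivative_X_sq_sub_one_pow_eq_zero hj hx
  have hu (x : ℝ) : ((X ^ 2 - 1 : ℝ[X]) ^ m).eval x = (-1) ^ m * (1 - x ^ 2) ^ m := by
    simp only [eval_pow, eval_sub, eval_X, eval_one, ← mul_pow]
    ring
  simp only [sq (eval _ _)]
  rw [integral_eval_mul_iterate_derivative (hvanish (by norm_num)) (hvanish (by norm_num)),
    ← Function.iterate_add_apply, ← two_mul, iterate_derivative_two_mul_X_sq_sub_one_pow]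
  simp only [eval_C, hu]
  have hsign : (-1 : ℝ) ^ m * (-1) ^ m = 1 := by rw [← mul_pow]; norm_num
  rw [integral_const_mul, integral_const_mul]
  linear_combination ((2 * m)! * ∫ x in (-1 : ℝ)..1, (1 - x ^ 2) ^ m) * hsign

theorem integral_legendrePoly_sq (m : ℕ) :
    ∫ x in (-1 : ℝ)..1, (legendrePoly m).eval x ^ 2 = 2 / (2 * m + 1) := by
  have hfac : ((2 * m + 1)! : ℝ) = (2 * m + 1) * (2 * m)! := by
    rw [factorial_succ]; push_cast; ring
  have hI := factorial_mul_integral_one_sub_sq_pow m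
  rw [hfac] at hI
  simp only [legendrePoly, eval_mul, eval_C, mul_pow]
  rw [integral_const_mul, integral_iterate_derivative_X_sq_sub_one_pow_sq]
  rw [eq_div_iff (by positivity)]
  have h4 : (4 : ℝ) ^ m = (2 ^ m) ^ 2 := by rw [← pow_mul, mul_comm, pow_mul]; norm_num
  field_simp
  linear_combination hI + 2 * (m ! : ℝ) ^ 2 * h4

theorem integral_one_sub_sq_mul_derivative_legendrePoly_sq (m : ℕ) :
    ∫ x in (-1 : ℝ)..1, (1 - x ^ 2) * (derivative (legendrePoly m)).eval x ^ 2 =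
      (m * (m + 1) : ℝ) * (2 / (2 * m + 1)) := by
  have h := integral_eval_mul_derivative (legendrePoly m)
    ((1 - X ^ 2) * derivative (legendrePoly m)) (-1) 1
  simp only [derivative_one_sub_X_sq_mul_derivative_legendrePoly, eval_mul, eval_neg, eval_sub,
    eval_pow, eval_X, eval_one, eval_add, eval_natCast] at h
  norm_num at h
  calc ∫ x in (-1 : ℝ)..1, (1 - x ^ 2) * (derivative (legendrePoly m)).eval x ^ 2
      = ∫ x in (-1 : ℝ)..1, (derivative (legendrePoly m)).eval x *
          ((1 - x ^ 2) * (derivative (legendrePoly m)).eval x) := by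
        congr 1; ext x; ring
    _ = ∫ x in (-1 : ℝ)..1, (legendrePoly m).eval x * (m * (m + 1) * (legendrePoly m).eval x) :=
        h.symm
    _ = (m * (m + 1) : ℝ) * ∫ x in (-1 : ℝ)..1, (legendrePoly m).eval x ^ 2 := by
        rw [← integral_const_mul]; congr 1; ext x; ring
    _ = (m * (m + 1) : ℝ) * (2 / (2 * m + 1)) := by rw [integral_legendrePoly_sq]

theorem Qpoly_succ_eq {m : ℕ} (hm : m ≠ 0) (x : ℝ) :
    Qpoly (m + 1) x = -((1 - x ^ 2) * (derivative (legendrePoly m)).eval x) / (m * (m + 1)) := by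
  have hm' : (m * (m + 1) : ℝ) ≠ 0 := by positivity
  have hA : derivative (C (-1 / (m * (m + 1)) : ℝ) *
      ((1 - X ^ 2) * derivative (legendrePoly m))) = legendrePoly m := by
    rw [derivative_C_mul, derivative_one_sub_X_sq_mul_derivative_legendrePoly, ← mul_assoc,
      show (-(m * (m + 1)) : ℝ[X]) = C (-(m * (m + 1) : ℝ)) by simp, ← C_mul,
      show (-1 / (m * (m + 1)) * -(m * (m + 1)) : ℝ) = 1 by field_simp, C_1, one_mul]
  have hFTC := integral_eval_derivative
    (C (-1 / (m * (m + 1)) : ℝ) * ((1 - X ^ 2) * derivative (legendrePoly m))) x 1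
  rw [hA] at hFTC
  rw [Qpoly, Nat.add_sub_cancel, legendreP_eq_eval_legendrePoly, hFTC]
  simp only [eval_mul, eval_C, eval_sub, eval_one, eval_pow, eval_X]
  field_simp
  ring

theorem stmt6 (n : ℕ) (hn : 2 ≤ n) :
    ∫ x in (-1 : ℝ)..1, (Qpoly n x) ^ 2 / (1 - x ^ 2) =
      2 / ((n : ℝ) * ((n : ℝ) - 1) * (2 * (n : ℝ) - 1)) := by
  obtain ⟨m, rfl⟩ : ∃ m, n = m + 1 := ⟨n - 1, by omega⟩
  have hm : m ≠ 0 := by omega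
  have hint : ∀ x : ℝ, Qpoly (m + 1) x ^ 2 / (1 - x ^ 2) =
      (1 - x ^ 2) * (derivative (legendrePoly m)).eval x ^ 2 / (m * (m + 1)) ^ 2 := by
    intro x
    rw [Qpoly_succ_eq hm]
    rcases eq_or_ne (1 - x ^ 2) 0 with hx | hx
    · simp [hx]
    · field_simp
  simp only [hint]
  have hm' : (m : ℝ) ≠ 0 := by exact_mod_cast hm
  have hodd : (2 * (m : ℝ) + 1) ≠ 0 := by positivity
  rw [integral_div, integral_one_sub_sq_mul_derivative_legendrePoly_sq]
  push_cast
  rw [add_sub_cancel_right, show 2 * ((m : ℝ) + 1) - 1 = 2 * m + 1 by ring]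
  field_simp
end

section
/- For n ≥ 1, the polar Legendre polynomial P_n satisfies (n+1) L_n(x) = (x - 1) P_n'(x) + P_n(x) for all x. -/
open intervalIntegral Finset Polynomial

/-
Differentiate the defining identity `-(n+1) ∫_x^1 L_n = (x - 1) P(x)`: by the fundamental
theorem of calculus the left side has derivative `(n+1) L_n(x)`, and by the product rule the
right side has derivative `(x - 1) P'(x) + P(x)`.
-/

theorem continuous_legendreP (n : ℕ) : Continuous (legendreP n) := by
  have h : ContDiff ℝ ⊤ fun y : ℝ => (y ^ 2 - 1) ^ n := by fun_prop
  exact continuous_const.mul (h.continuous_iteratedDeriv n le_top)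

theorem hasDerivAt_const_mul_integral_left {f : ℝ → ℝ} (hf : Continuous f) (c b x : ℝ) :
    HasDerivAt (fun u => c * ∫ t in u..b, f t) (-c * f x) x := by
  simpa only [mul_neg, neg_mul] using
    (integral_hasDerivAt_left (hf.intervalIntegrable _ _) (hf.stronglyMeasurableAtFilter _ _)
      hf.continuousAt).const_mul c

theorem Polynomial.hasDerivAt_sub_one_mul_eval (P : ℝ[X]) (x : ℝ) :
    HasDerivAt (fun u => (u - 1) * P.eval u) ((x - 1) * (derivative P).eval x + P.eval x) x := by
  simpa only [one_mul, add_comm] using ((hasDerivAt_id' x).sub_const 1).fun_mul (P.hasDerivAt x)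

theorem stmt8_general (n : ℕ) (P : Polynomial ℝ)
    (hdef : ∀ x : ℝ, -((n : ℝ) + 1) * ∫ t in x..(1 : ℝ), legendreP n t = (x - 1) * P.eval x)
    (x : ℝ) :
    ((n : ℝ) + 1) * legendreP n x = (x - 1) * (Polynomial.derivative P).eval x + P.eval x := by
  have hQ := hasDerivAt_const_mul_integral_left (continuous_legendreP n) (-((n : ℝ) + 1)) 1 x
  rw [neg_neg, funext hdef] at hQ
  exact hQ.unique (P.hasDerivAt_sub_one_mul_eval x)

theorem stmt8 (n : ℕ) (hn : 1 ≤ n) (P : Polynomial ℝ) (hdeg : P.degree = n)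
    (hdef : ∀ x : ℝ, -((n : ℝ) + 1) * ∫ t in x..(1 : ℝ), legendreP n t = (x - 1) * P.eval x)
    (x : ℝ) :
    ((n : ℝ) + 1) * legendreP n x = (x - 1) * (Polynomial.derivative P).eval x + P.eval x :=
  stmt8_general n P hdef x
end
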